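/- arXiv:1310.4533 — 2 statements merged into one kernel-verified Lean document; each statement's English description precedes it below -/
import Mathlib

section
/- Let X be a linearly ordered set and u, v ultrafilters over X. Then u ≡ v if and only if either u = v, or u and v are both non-principal and either (I_u ∈ u, I_v ∈ v and I_u = I_v) or (J_u ∈ u, J_v ∈ v and J_u = J_v). -/
/-- The ultrafilter extension of a binary relation `R` on `X`:
`u R̃ v` iff `{x | {y | R x y} ∈ v} ∈ u`. -/
def relExt {X : Type*} (R : X → X → Prop) (u v : Ultrafilter X) : Prop :=
  {x : X | {y : X | R x y} ∈ v} ∈ u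

/-- `I_u`: the intersection of all downward closed sets belonging to `u`. -/
def Iset {X : Type*} [LinearOrder X] (u : Ultrafilter X) : Set X :=
  ⋂₀ {I : Set X | I ∈ u ∧ ∀ ⦃a b : X⦄, a ≤ b → b ∈ I → a ∈ I}

/-- `J_u`: the intersection of all upward closed sets belonging to `u`. -/
def Jset {X : Type*} [LinearOrder X] (u : Ultrafilter X) : Set X :=
  ⋂₀ {J : Set X | J ∈ u ∧ ∀ ⦃a b : X⦄, a ≤ b → a ∈ J → b ∈ J}

/-- The ultrafilter extension of a binary operation `F` on `X`. -/
def opExt {X : Type*} (F : X → X → X) (u v : Ultrafilter X) : Ultrafilter X :=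
  u.bind (fun x => v.map (F x))

/-!
Unfolding the definitions, `u ⊴ v` says `I_v ∈ u ∨ J_u ∈ v`, because `x ∈ I_v ↔ [x, ∞) ∈ v` and
`x ∈ J_u ↔ (-∞, x] ∈ u`. If `u = pure a`, then `u ⊴ v` and `v ⊴ u` put both `[a, ∞)` and `(-∞, a]`
into `v`, so `v = pure a`. For non-principal `u` the set `J_u` is the complement of `I_u`, so
`u ⊴ v` becomes `I_u ∈ v → I_v ∈ u`. Finally `I_u ∈ v ↔ I_v ∈ u` forces `I_u = I_v`: a lower set
either belongs to an ultrafilter `w` and then contains `I_w`, or it does not and is contained in `I_w`.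
-/

open Set

section
variable {X : Type*} [LinearOrder X]

/-- The relation `u ⊴ v`. -/
def ExtLE (u v : Ultrafilter X) : Prop :=
  relExt (· ≤ ·) u v ∨ relExt (· ≥ ·) v u

variable (u v : Ultrafilter X)

theorem Iset_subset_of_mem {D : Set X} (hD : D ∈ u) (hlow : IsLowerSet D) : Iset u ⊆ D :=
  sInter_subset_of_mem ⟨hD, fun _ _ hab hb => hlow hab hb⟩

theorem Jset_subset_of_mem {D : Set X} (hD : D ∈ u) (hup : IsUpperSet D) : Jset u ⊆ D :=
  sInter_subset_of_mem ⟨hD, hup⟩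

theorem mem_Iset_iff {x : X} : x ∈ Iset u ↔ Ici x ∈ u := by
  refine ⟨fun hx => ?_, fun hx D hD => ?_⟩
  · by_contra h
    have hlt : Iio x ∈ u := by
      simpa only [compl_Ici] using Ultrafilter.compl_mem_iff_notMem.2 h
    exact lt_irrefl x (Iset_subset_of_mem u hlt (isLowerSet_Iio x) hx)
  · obtain ⟨d, hdD, hxd⟩ := Ultrafilter.nonempty_of_mem (Filter.inter_mem hD.1 hx)
    exact hD.2 hxd hdD

theorem mem_Jset_iff {x : X} : x ∈ Jset u ↔ Iic x ∈ u := by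
  refine ⟨fun hx => ?_, fun hx D hD => ?_⟩
  · by_contra h
    have hgt : Ioi x ∈ u := by
      simpa only [compl_Iic] using Ultrafilter.compl_mem_iff_notMem.2 h
    exact lt_irrefl x (Jset_subset_of_mem u hgt (isUpperSet_Ioi x) hx)
  · obtain ⟨d, hdD, hdx⟩ := Ultrafilter.nonempty_of_mem (Filter.inter_mem hD.1 hx)
    exact hD.2 hdx hdD

theorem isLowerSet_Iset : IsLowerSet (Iset u) := fun _ _ hyx hx =>
  (mem_Iset_iff u).2 (Filter.mem_of_superset ((mem_Iset_iff u).1 hx) (Ici_subset_Ici.2 hyx))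

theorem subset_Iset_of_notMem {D : Set X} (hD : D ∉ u) (hlow : IsLowerSet D) : D ⊆ Iset u := by
  intro x hx
  refine (mem_Iset_iff u).2 (Filter.mem_of_superset (Ultrafilter.compl_mem_iff_notMem.2 hD) ?_)
  intro y hy
  by_contra hxy
  exact hy (hlow (le_of_lt (not_le.1 hxy)) hx)

theorem Iset_pure (a : X) : Iset (pure a : Ultrafilter X) = Iic a := by
  ext y
  rw [mem_Iset_iff, Ultrafilter.mem_pure, mem_Ici, mem_Iic]

theorem Jset_pure (a : X) : Jset (pure a : Ultrafilter X) = Ici a := by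
  ext y
  rw [mem_Jset_iff, Ultrafilter.mem_pure, mem_Iic, mem_Ici]

theorem eq_pure_of_Ici_mem_of_Iic_mem {a : X} (h₁ : Ici a ∈ u) (h₂ : Iic a ∈ u) :
    u = pure a := by
  have : {a} ∈ (u : Filter X) := by simpa only [Ici_inter_Iic, Icc_self] using Filter.inter_mem h₁ h₂
  exact Ultrafilter.eq_of_le (Filter.le_pure_iff.2 this)

theorem mem_Iset_or_mem_Jset (x : X) : x ∈ Iset u ∨ x ∈ Jset u := by
  rw [mem_Iset_iff, mem_Jset_iff, ← Ultrafilter.union_mem_iff, Ici_union_Iic]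
  exact Filter.univ_mem

theorem Iset_mem_or_Jset_mem : Iset u ∈ u ∨ Jset u ∈ u := by
  rw [← Ultrafilter.union_mem_iff]
  exact Filter.univ_mem' (mem_Iset_or_mem_Jset u)

theorem Jset_eq_compl_Iset (hu : ¬ ∃ x, u = pure x) : Jset u = (Iset u)ᶜ := by
  ext x
  refine ⟨fun hJ hI => hu ⟨x, ?_⟩, (mem_Iset_or_mem_Jset u x).resolve_left⟩
  exact eq_pure_of_Ici_mem_of_Iic_mem u ((mem_Iset_iff u).1 hI) ((mem_Jset_iff u).1 hJ)

theorem Iset_eq_of_mem_iff (h : Iset u ∈ v ↔ Iset v ∈ u) : Iset u = Iset v := by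
  by_cases huv : Iset u ∈ v
  · exact (Iset_subset_of_mem u (h.1 huv) (isLowerSet_Iset v)).antisymm
      (Iset_subset_of_mem v huv (isLowerSet_Iset u))
  · exact (subset_Iset_of_notMem v huv (isLowerSet_Iset u)).antisymm
      (subset_Iset_of_notMem u (mt h.2 huv) (isLowerSet_Iset v))

theorem relExt_le_iff : relExt (· ≤ ·) u v ↔ Iset v ∈ u := by
  have : Iset v = {x | {y | x ≤ y} ∈ v} := ext fun _ => mem_Iset_iff v
  rw [relExt, this]

theorem relExt_ge_iff : relExt (· ≥ ·) u v ↔ Jset v ∈ u := by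
  have : Jset v = {x | {y | x ≥ y} ∈ v} := ext fun _ => mem_Jset_iff v
  rw [relExt, this]

theorem extLE_iff : ExtLE u v ↔ Iset v ∈ u ∨ Jset u ∈ v :=
  or_congr (relExt_le_iff u v) (relExt_ge_iff v u)

theorem extLE_refl : ExtLE u u :=
  (extLE_iff u u).2 (Iset_mem_or_Jset_mem u)

theorem extLE_pure_left_iff (a : X) : ExtLE (pure a) v ↔ Ici a ∈ v := by
  rw [extLE_iff, Ultrafilter.mem_pure, mem_Iset_iff, Jset_pure, or_self]

theorem extLE_pure_right_iff (a : X) : ExtLE u (pure a) ↔ Iic a ∈ u := by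
  rw [extLE_iff, Iset_pure, Ultrafilter.mem_pure, mem_Jset_iff, or_self]

theorem eq_pure_of_extLE_pure {a : X} (h₁ : ExtLE (pure a) u) (h₂ : ExtLE u (pure a)) :
    u = pure a :=
  eq_pure_of_Ici_mem_of_Iic_mem u ((extLE_pure_left_iff u a).1 h₁)
    ((extLE_pure_right_iff u a).1 h₂)

theorem extLE_iff_of_nonprincipal (hu : ¬ ∃ x, u = pure x) :
    ExtLE u v ↔ (Iset u ∈ v → Iset v ∈ u) := by
  rw [extLE_iff, Jset_eq_compl_Iset u hu, Ultrafilter.compl_mem_iff_notMem, or_iff_not_imp_right,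
    not_not]

end

/-- Characterization of the equivalence `≡` in terms of supports. -/
theorem stmt12 {X : Type*} [LinearOrder X] (u v : Ultrafilter X) :
    (((relExt (· ≤ ·) u v ∨ relExt (· ≥ ·) v u) ∧
      (relExt (· ≤ ·) v u ∨ relExt (· ≥ ·) u v)) ↔
      (u = v ∨
        ((¬ ∃ x : X, u = pure x) ∧ (¬ ∃ x : X, v = pure x) ∧
          ((Iset u ∈ u ∧ Iset v ∈ v ∧ Iset u = Iset v) ∨
           (Jset u ∈ u ∧ Jset v ∈ v ∧ Jset u = Jset v))))) := by
  change ExtLE u v ∧ ExtLE v u ↔ _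
  constructor
  · rintro ⟨huv, hvu⟩
    by_cases hu : ∃ a, u = pure a
    · obtain ⟨a, rfl⟩ := hu
      exact Or.inl (eq_pure_of_extLE_pure v huv hvu).symm
    by_cases hv : ∃ b, v = pure b
    · obtain ⟨b, rfl⟩ := hv
      exact Or.inl (eq_pure_of_extLE_pure u hvu huv)
    rw [extLE_iff_of_nonprincipal u v hu] at huv
    rw [extLE_iff_of_nonprincipal v u hv] at hvu
    have hI := Iset_eq_of_mem_iff u v ⟨huv, hvu⟩
    rw [hI] at huv hvu
    refine Or.inr ⟨hu, hv, ?_⟩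
    rw [Jset_eq_compl_Iset u hu, Jset_eq_compl_Iset v hv, hI]
    by_cases hIu : Iset v ∈ u
    · exact Or.inl ⟨hIu, hvu hIu, rfl⟩
    · exact Or.inr ⟨Ultrafilter.compl_mem_iff_notMem.2 hIu,
        Ultrafilter.compl_mem_iff_notMem.2 (mt huv hIu), rfl⟩
  · rintro (rfl | ⟨-, -, ⟨hIu, hIv, hI⟩ | ⟨hJu, hJv, hJ⟩⟩)
    · exact ⟨extLE_refl u, extLE_refl u⟩
    · exact ⟨(extLE_iff u v).2 (Or.inl (hI ▸ hIu)), (extLE_iff v u).2 (Or.inl (hI ▸ hIv))⟩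
    · exact ⟨(extLE_iff u v).2 (Or.inr (hJ ▸ hJv)), (extLE_iff v u).2 (Or.inr (hJ ▸ hJu))⟩
end

section
/- Let X be a linearly ordered set. For all ultrafilters u, v over X: u ≤̃ v or u ≥̃ v. Consequently m̃ and M̃ are quasi-trivial: m̃(u,v) = u or m̃(u,v) = v, and M̃(u,v) = u or M̃(u,v) = v; in particular both operations are idempotent. -/
lemma mem_opExt {X : Type*} (F : X → X → X) (u v : Ultrafilter X) (S : Set X) :
    S ∈ opExt F u v ↔ {x | {y | F x y ∈ S} ∈ v} ∈ u := by
  change S ∈ Filter.bind ↑u (fun x => ↑(Ultrafilter.map (F x) v)) ↔ _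
  simp only [Filter.mem_bind', Ultrafilter.mem_coe, Ultrafilter.mem_map, Set.preimage,
    Set.mem_setOf_eq]

lemma uf_eq {X : Type*} {u w : Ultrafilter X} (h : ∀ s ∈ u, s ∈ w) : w = u :=
  Ultrafilter.coe_le_coe.mp (fun s hs => h s hs)

lemma key {X : Type*} [LinearOrder X] (u v : Ultrafilter X) :
    relExt (· ≤ ·) u v ∨ relExt (· ≥ ·) u v := by
  by_cases h : {x : X | {y : X | x ≤ y} ∈ v} ∈ u
  · exact Or.inl h
  · right
    have h' : {x : X | {y : X | x ≤ y} ∈ v}ᶜ ∈ u :=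
      Ultrafilter.compl_mem_iff_notMem.mpr h
    refine u.toFilter.mem_of_superset h' ?_
    intro x hx
    simp only [Set.mem_compl_iff, Set.mem_setOf_eq] at hx ⊢
    have : {y : X | x ≤ y}ᶜ ∈ v := Ultrafilter.compl_mem_iff_notMem.mpr hx
    exact v.toFilter.mem_of_superset this (fun y hy => le_of_lt (not_le.mp hy))

lemma min_left {X : Type*} [LinearOrder X] {u v : Ultrafilter X}
    (h : relExt (· ≤ ·) u v) : opExt min u v = u := by
  refine uf_eq (fun S hS => ?_)
  rw [mem_opExt]
  refine u.toFilter.mem_of_superset (Filter.inter_mem hS h) ?_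
  rintro x ⟨hxS, hx⟩
  exact v.toFilter.mem_of_superset hx (fun y hy => by
    simp only [Set.mem_setOf_eq] at *
    rwa [min_eq_left hy])

lemma min_right {X : Type*} [LinearOrder X] {u v : Ultrafilter X}
    (h : relExt (· ≥ ·) u v) : opExt min u v = v := by
  refine uf_eq (fun S hS => ?_)
  rw [mem_opExt]
  refine u.toFilter.mem_of_superset h ?_
  intro x hx
  exact v.toFilter.mem_of_superset (Filter.inter_mem hS hx) (fun y ⟨hyS, hy⟩ => by
    simp only [Set.mem_setOf_eq] at *
    rwa [min_eq_right hy])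

lemma max_left {X : Type*} [LinearOrder X] {u v : Ultrafilter X}
    (h : relExt (· ≥ ·) u v) : opExt max u v = u := by
  refine uf_eq (fun S hS => ?_)
  rw [mem_opExt]
  refine u.toFilter.mem_of_superset (Filter.inter_mem hS h) ?_
  rintro x ⟨hxS, hx⟩
  exact v.toFilter.mem_of_superset hx (fun y hy => by
    simp only [Set.mem_setOf_eq] at *
    rwa [max_eq_left hy])

lemma max_right {X : Type*} [LinearOrder X] {u v : Ultrafilter X}
    (h : relExt (· ≤ ·) u v) : opExt max u v = v := by
  refine uf_eq (fun S hS => ?_)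
  rw [mem_opExt]
  refine u.toFilter.mem_of_superset h ?_
  intro x hx
  exact v.toFilter.mem_of_superset (Filter.inter_mem hS hx) (fun y ⟨hyS, hy⟩ => by
    simp only [Set.mem_setOf_eq] at *
    rwa [max_eq_right hy])

/-- `u ≤̃ v` or `u ≥̃ v`; consequently `m̃` and `M̃` are quasi-trivial,
in particular idempotent. -/
theorem stmt15 {X : Type*} [LinearOrder X] :
    (∀ u v : Ultrafilter X, relExt (· ≤ ·) u v ∨ relExt (· ≥ ·) u v) ∧
    (∀ u v : Ultrafilter X, opExt min u v = u ∨ opExt min u v = v) ∧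
    (∀ u v : Ultrafilter X, opExt max u v = u ∨ opExt max u v = v) ∧
    (∀ u : Ultrafilter X, opExt min u u = u ∧ opExt max u u = u) := by
  refine ⟨key, fun u v => ?_, fun u v => ?_, fun u => ?_⟩
  · rcases key u v with h | h
    · exact Or.inl (min_left h)
    · exact Or.inr (min_right h)
  · rcases key u v with h | h
    · exact Or.inr (max_right h)
    · exact Or.inl (max_left h)
  · rcases key u u with h | h
    · exact ⟨min_left h, max_right h⟩
    · exact ⟨min_right h, max_left h⟩
end
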